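/- Under the Kähler fibration condition T^H W = { u ∈ TW : ω(u, X̄) = 0 for all X ∈ TX }, the 1-form k defined by k(U^H) = ½(L_{U^H} dv_X)/dv_X vanishes identically, i.e., the horizontal Lie derivative of the fiberwise Riemannian volume form dv_X = (ω^n)^{(0)}/n! is zero, assuming ω is closed. -/

import Mathlib

/-- Total space of a local model of the fibration: vertical coordinates in ℝ^{2n}
(the fiber X has real dimension 2n) and horizontal/base coordinates in ℝ^m. -/
abbrev TotSp (n m : ℕ) := (Fin (2 * n) → ℝ) × (Fin m → ℝ)

/-- The i-th standard vertical coordinate vector. -/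
def vertBasis (n m : ℕ) (i : Fin (2 * n)) : TotSp n m :=
  (Pi.single i 1, 0)

/-- The density of the fiberwise volume form dv_X = (ω^n)^{(0)}/n! with respect to the
standard vertical coordinate volume, given by the Pfaffian of the vertical restriction
of ω: (ω^n/n!)(e₁,…,e_{2n}) = (1/(2^n n!)) Σ_σ sgn σ Π_i ω(e_{σ(2i)}, e_{σ(2i+1)}). -/
noncomputable def fibDens (n m : ℕ)
    (ω : TotSp n m → TotSp n m →ₗ[ℝ] TotSp n m →ₗ[ℝ] ℝ) (x : TotSp n m) : ℝ :=
  (1 / ((2 : ℝ) ^ n * n.factorial)) *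
    ∑ σ : Equiv.Perm (Fin (2 * n)),
      ((Equiv.Perm.sign σ : ℤ) : ℝ) *
        ∏ i : Fin n,
          ω x (vertBasis n m (σ ⟨2 * i.val, by have := i.isLt; omega⟩))
              (vertBasis n m (σ ⟨2 * i.val + 1, by have := i.isLt; omega⟩))

namespace Stmt9


def pl (n : ℕ) (i : Fin n) : Fin (2 * n) := ⟨2 * i.val, by have := i.isLt; omega⟩
def pr (n : ℕ) (i : Fin n) : Fin (2 * n) := ⟨2 * i.val + 1, by have := i.isLt; omega⟩

lemma pl_inj {n : ℕ} {i j : Fin n} (h : pl n i = pl n j) : i = j := by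
  have := congrArg Fin.val h
  simp only [pl] at this
  exact Fin.ext (by omega)

lemma pr_inj {n : ℕ} {i j : Fin n} (h : pr n i = pr n j) : i = j := by
  have := congrArg Fin.val h
  simp only [pr] at this
  exact Fin.ext (by omega)

lemma pl_ne_pr {n : ℕ} (i j : Fin n) : pl n i ≠ pr n j := by
  intro h
  have := congrArg Fin.val h
  simp only [pl, pr] at this
  omega

def pe (n : ℕ) : Fin n × Fin 2 ≃ Fin (2 * n) where
  toFun x := ⟨2 * x.1.val + x.2.val, by have := x.1.isLt; have := x.2.isLt; omega⟩
  invFun p := (⟨p.val / 2, by have := p.isLt; omega⟩, ⟨p.val % 2, by omega⟩)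
  left_inv := by
    rintro ⟨⟨i, hi⟩, ⟨b, hb⟩⟩
    have h1 : (2 * i + b) / 2 = i := by omega
    have h2 : (2 * i + b) % 2 = b := by omega
    simp [Prod.ext_iff, Fin.ext_iff, h1, h2]
  right_inv := by
    rintro ⟨p, hp⟩
    simp [Fin.ext_iff]
    omega

lemma pe_zero {n : ℕ} (k : Fin n) : pe n (k, 0) = pl n k := by
  simp [pe, pl, Fin.ext_iff]

lemma pe_one {n : ℕ} (k : Fin n) : pe n (k, 1) = pr n k := by
  simp [pe, pr, Fin.ext_iff]

lemma sum_split {n : ℕ} (g : Fin (2 * n) → ℝ) :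
    ∑ p : Fin (2 * n), g p = ∑ k : Fin n, (g (pl n k) + g (pr n k)) := by
  rw [← Equiv.sum_comp (pe n) g, Fintype.sum_prod_type]
  refine Finset.sum_congr rfl fun k _ => ?_
  rw [Fin.sum_univ_two, pe_zero, pe_one]

lemma cover {n : ℕ} (p : Fin (2 * n)) : (∃ i, p = pl n i) ∨ (∃ i, p = pr n i) := by
  rcases Nat.even_or_odd p.val with he | ho
  · exact Or.inl ⟨⟨p.val / 2, by have := p.isLt; omega⟩, by
      obtain ⟨c, hc⟩ := he; exact Fin.ext (by simp [pl]; omega)⟩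
  · exact Or.inr ⟨⟨p.val / 2, by have := p.isLt; omega⟩, by
      obtain ⟨c, hc⟩ := ho; exact Fin.ext (by simp [pr]; omega)⟩

noncomputable def sgnr {N : ℕ} (σ : Equiv.Perm (Fin N)) : ℝ := ((Equiv.Perm.sign σ : ℤ) : ℝ)

def rho {N : ℕ} (j l t : Fin N) : Fin N := if t = j then l else t

variable {n : ℕ} (a C : Fin (2 * n) → Fin (2 * n) → ℝ)

noncomputable def Spf (j l : Fin (2 * n)) (σ : Equiv.Perm (Fin (2 * n))) : ℝ :=
  ∏ i : Fin n, a (rho j l (σ (pl n i))) (rho j l (σ (pr n i)))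

noncomputable def Ppf : ℝ :=
  ∑ σ : Equiv.Perm (Fin (2 * n)), sgnr σ * ∏ i : Fin n, a (σ (pl n i)) (σ (pr n i))

lemma Spf_diag (j : Fin (2 * n)) (σ : Equiv.Perm (Fin (2 * n))) :
    Spf a j j σ = ∏ i : Fin n, a (σ (pl n i)) (σ (pr n i)) := by
  have h : ∀ t : Fin (2 * n), rho j j t = t := by
    intro t; unfold rho; split <;> simp_all
  simp only [Spf, h]

lemma rho_swap {N : ℕ} (j l t : Fin N) : rho j l (Equiv.swap j l t) = rho j l t := by
  rcases eq_or_ne t j with rfl | h1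
  · rw [Equiv.swap_apply_left]
    unfold rho
    rcases eq_or_ne l t with rfl | h2 <;> simp_all
  · rcases eq_or_ne t l with rfl | h2
    · rw [Equiv.swap_apply_right]
      unfold rho
      simp [h1]
    · rw [Equiv.swap_apply_of_ne_of_ne h1 h2]

lemma sum_Spf_swap {j l : Fin (2 * n)} (h : l ≠ j) :
    ∑ σ : Equiv.Perm (Fin (2 * n)), sgnr σ * Spf a j l σ = 0 := by
  have key : ∀ σ : Equiv.Perm (Fin (2 * n)), Spf a j l (Equiv.swap j l * σ) = Spf a j l σ := by
    intro σ
    unfold Spf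
    refine Finset.prod_congr rfl fun i _ => ?_
    rw [Equiv.Perm.mul_apply, Equiv.Perm.mul_apply, rho_swap, rho_swap]
  have hs : ∀ σ : Equiv.Perm (Fin (2 * n)), sgnr (Equiv.swap j l * σ) = -sgnr σ := by
    intro σ
    unfold sgnr
    rw [Equiv.Perm.sign_mul, Equiv.Perm.sign_swap (Ne.symm h)]
    push_cast
    ring
  have reidx : ∑ σ : Equiv.Perm (Fin (2 * n)), sgnr σ * Spf a j l σ
      = ∑ σ : Equiv.Perm (Fin (2 * n)),
          sgnr (Equiv.swap j l * σ) * Spf a j l (Equiv.swap j l * σ) :=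
    (Equiv.sum_comp (Equiv.mulLeft (Equiv.swap j l)) fun σ => sgnr σ * Spf a j l σ).symm
  have : ∑ σ : Equiv.Perm (Fin (2 * n)), sgnr σ * Spf a j l σ
      = -∑ σ : Equiv.Perm (Fin (2 * n)), sgnr σ * Spf a j l σ := by
    conv_lhs => rw [reidx]
    rw [← Finset.sum_neg_distrib]
    refine Finset.sum_congr rfl fun σ _ => ?_
    rw [hs, key]
    ring
  linarith



noncomputable def Rpf (j : Fin (2 * n)) (σ : Equiv.Perm (Fin (2 * n))) : ℝ :=
  ∏ i : Fin n,
    (if σ (pl n i) = j then ∑ l, C l j * a l (σ (pr n i))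
     else if σ (pr n i) = j then ∑ l, C l j * a (σ (pl n i)) l
     else a (σ (pl n i)) (σ (pr n i)))

lemma Rpf_at_pr (σ : Equiv.Perm (Fin (2 * n))) (k : Fin n) :
    Rpf a C (σ (pr n k)) σ
      = (∑ l, C l (σ (pr n k)) * a (σ (pl n k)) l)
          * ∏ i ∈ Finset.univ.erase k, a (σ (pl n i)) (σ (pr n i)) := by
  unfold Rpf
  rw [← Finset.mul_prod_erase Finset.univ _ (Finset.mem_univ k)]
  congr 1
  · have h0 : σ (pl n k) ≠ σ (pr n k) := fun h => (pl_ne_pr k k) (σ.injective h)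
    simp [h0]
  · refine Finset.prod_congr rfl fun i hi => ?_
    have hik : i ≠ k := (Finset.mem_erase.mp hi).1
    have h1 : σ (pl n i) ≠ σ (pr n k) := fun h => (pl_ne_pr i k) (σ.injective h)
    have h2 : σ (pr n i) ≠ σ (pr n k) := fun h => hik (pr_inj (σ.injective h))
    simp [h1, h2]

lemma Rpf_eq_sum (j : Fin (2 * n)) (σ : Equiv.Perm (Fin (2 * n))) :
    Rpf a C j σ = ∑ l, C l j * Spf a j l σ := by
  rcases cover (σ.symm j) with ⟨i0, hi0⟩ | ⟨i0, hi0⟩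
  · have hj : σ (pl n i0) = j := by rw [← hi0]; simp
    unfold Rpf Spf
    have hrest : ∀ i ∈ Finset.univ.erase i0,
        (if σ (pl n i) = j then ∑ l, C l j * a l (σ (pr n i))
         else if σ (pr n i) = j then ∑ l, C l j * a (σ (pl n i)) l
         else a (σ (pl n i)) (σ (pr n i))) = a (σ (pl n i)) (σ (pr n i)) := by
      intro i hi
      have hik : i ≠ i0 := (Finset.mem_erase.mp hi).1
      have h1 : σ (pl n i) ≠ j := by rw [← hj]; exact fun h => hik (pl_inj (σ.injective h))
      have h2 : σ (pr n i) ≠ j := by rw [← hj]; exact fun h => (pl_ne_pr i0 i) (σ.injective h).symm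
      simp [h1, h2]
    rw [← Finset.mul_prod_erase Finset.univ _ (Finset.mem_univ i0),
      Finset.prod_congr rfl hrest, if_pos hj, Finset.sum_mul]
    refine Finset.sum_congr rfl fun l _ => ?_
    rw [mul_assoc]
    congr 1
    rw [← Finset.mul_prod_erase Finset.univ _ (Finset.mem_univ i0)]
    have h2 : σ (pr n i0) ≠ j := by rw [← hj]; exact fun h => (pl_ne_pr i0 i0) (σ.injective h).symm
    congr 1
    · unfold rho
      rw [if_pos hj, if_neg h2]
    · refine Finset.prod_congr rfl fun i hi => ?_
      have hik : i ≠ i0 := (Finset.mem_erase.mp hi).1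
      have h1 : σ (pl n i) ≠ j := by rw [← hj]; exact fun h => hik (pl_inj (σ.injective h))
      have h2' : σ (pr n i) ≠ j := by rw [← hj]; exact fun h => (pl_ne_pr i0 i) (σ.injective h).symm
      unfold rho
      rw [if_neg h1, if_neg h2']
  · have hj : σ (pr n i0) = j := by rw [← hi0]; simp
    have h0 : σ (pl n i0) ≠ j := by rw [← hj]; exact fun h => (pl_ne_pr i0 i0) (σ.injective h)
    unfold Rpf Spf
    have hrest : ∀ i ∈ Finset.univ.erase i0,
        (if σ (pl n i) = j then ∑ l, C l j * a l (σ (pr n i))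
         else if σ (pr n i) = j then ∑ l, C l j * a (σ (pl n i)) l
         else a (σ (pl n i)) (σ (pr n i))) = a (σ (pl n i)) (σ (pr n i)) := by
      intro i hi
      have hik : i ≠ i0 := (Finset.mem_erase.mp hi).1
      have h1 : σ (pl n i) ≠ j := by rw [← hj]; exact fun h => (pl_ne_pr i i0) (σ.injective h)
      have h2 : σ (pr n i) ≠ j := by rw [← hj]; exact fun h => hik (pr_inj (σ.injective h))
      simp [h1, h2]
    rw [← Finset.mul_prod_erase Finset.univ _ (Finset.mem_univ i0),
      Finset.prod_congr rfl hrest, if_neg h0, if_pos hj, Finset.sum_mul]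
    refine Finset.sum_congr rfl fun l _ => ?_
    rw [mul_assoc]
    congr 1
    rw [← Finset.mul_prod_erase Finset.univ _ (Finset.mem_univ i0)]
    congr 1
    · unfold rho
      rw [if_pos hj, if_neg h0]
    · refine Finset.prod_congr rfl fun i hi => ?_
      have hik : i ≠ i0 := (Finset.mem_erase.mp hi).1
      have h1 : σ (pl n i) ≠ j := by rw [← hj]; exact fun h => (pl_ne_pr i i0) (σ.injective h)
      have h2' : σ (pr n i) ≠ j := by rw [← hj]; exact fun h => hik (pr_inj (σ.injective h))
      unfold rho
      rw [if_neg h1, if_neg h2']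

-- evaluation of Rpf when j = σ (pl k)
lemma Rpf_at_pl (σ : Equiv.Perm (Fin (2 * n))) (k : Fin n) :
    Rpf a C (σ (pl n k)) σ
      = (∑ l, C l (σ (pl n k)) * a l (σ (pr n k)))
          * ∏ i ∈ Finset.univ.erase k, a (σ (pl n i)) (σ (pr n i)) := by
  unfold Rpf
  rw [← Finset.mul_prod_erase Finset.univ _ (Finset.mem_univ k)]
  congr 1
  · simp
  · refine Finset.prod_congr rfl fun i hi => ?_
    have hik : i ≠ k := (Finset.mem_erase.mp hi).1
    have h1 : σ (pl n i) ≠ σ (pl n k) := fun h => hik (pl_inj (σ.injective h))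
    have h2 : σ (pr n i) ≠ σ (pl n k) := fun h => (pl_ne_pr k i) (σ.injective h).symm
    simp [h1, h2]

lemma keyComb :
    ∑ σ : Equiv.Perm (Fin (2 * n)), sgnr σ *
      ∑ k : Fin n,
        (∑ l, (C l (σ (pl n k)) * a l (σ (pr n k)) + C l (σ (pr n k)) * a (σ (pl n k)) l))
          * ∏ i ∈ Finset.univ.erase k, a (σ (pl n i)) (σ (pr n i))
    = (∑ l, C l l) * Ppf a := by
  have step1 : ∀ σ : Equiv.Perm (Fin (2 * n)),
      ∑ k : Fin n,
        (∑ l, (C l (σ (pl n k)) * a l (σ (pr n k)) + C l (σ (pr n k)) * a (σ (pl n k)) l))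
          * ∏ i ∈ Finset.univ.erase k, a (σ (pl n i)) (σ (pr n i))
      = ∑ j, Rpf a C j σ := by
    intro σ
    rw [← Equiv.sum_comp σ (fun j => Rpf a C j σ), sum_split (fun p => Rpf a C (σ p) σ)]
    refine Finset.sum_congr rfl fun k _ => ?_
    rw [Rpf_at_pl, Rpf_at_pr, ← add_mul, ← Finset.sum_add_distrib]
  calc ∑ σ : Equiv.Perm (Fin (2 * n)), sgnr σ *
      ∑ k : Fin n,
        (∑ l, (C l (σ (pl n k)) * a l (σ (pr n k)) + C l (σ (pr n k)) * a (σ (pl n k)) l))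
          * ∏ i ∈ Finset.univ.erase k, a (σ (pl n i)) (σ (pr n i))
      = ∑ σ : Equiv.Perm (Fin (2 * n)), ∑ j, sgnr σ * Rpf a C j σ := by
        refine Finset.sum_congr rfl fun σ _ => ?_
        rw [step1, Finset.mul_sum]
    _ = ∑ j, ∑ σ : Equiv.Perm (Fin (2 * n)), sgnr σ * Rpf a C j σ := Finset.sum_comm
    _ = ∑ j, C j j * Ppf a := by
        refine Finset.sum_congr rfl fun j _ => ?_
        have : ∀ σ : Equiv.Perm (Fin (2 * n)), sgnr σ * Rpf a C j σ
            = ∑ l, C l j * (sgnr σ * Spf a j l σ) := by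
          intro σ
          rw [Rpf_eq_sum, Finset.mul_sum]
          exact Finset.sum_congr rfl fun l _ => by ring
        simp only [this]
        rw [Finset.sum_comm]
        rw [Finset.sum_eq_single j]
        · rw [← Finset.mul_sum]
          congr 1
          unfold Ppf
          refine Finset.sum_congr rfl fun σ _ => ?_
          rw [Spf_diag]
        · intro l _ hl
          rw [← Finset.mul_sum, sum_Spf_swap a hl, mul_zero]
        · intro h
          exact absurd (Finset.mem_univ j) h
    _ = (∑ l, C l l) * Ppf a := by rw [Finset.sum_mul]


noncomputable def Amat (n m : ℕ) (ω : TotSp n m → TotSp n m →ₗ[ℝ] TotSp n m →ₗ[ℝ] ℝ)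
    (x : TotSp n m) (i j : Fin (2 * n)) : ℝ :=
  ω x (vertBasis n m i) (vertBasis n m j)

noncomputable def Cmat (n m : ℕ) (Zh : TotSp n m → Fin (2 * n) → ℝ)
    (x : TotSp n m) (l i : Fin (2 * n)) : ℝ :=
  fderiv ℝ (fun y => Zh y l) x (vertBasis n m i)

lemma vert_repr {n m : ℕ} (u : Fin (2 * n) → ℝ) :
    ((u, 0) : TotSp n m) = ∑ l, u l • vertBasis n m l := by
  apply Prod.ext
  · rw [Prod.fst_sum]
    funext j
    simp only [Finset.sum_apply, vertBasis, Prod.smul_fst, Pi.smul_apply, smul_eq_mul,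
      Pi.single_apply, mul_ite, mul_one, mul_zero]
    simp
  · rw [Prod.snd_sum]
    simp [vertBasis]

lemma omega_expand {n m : ℕ} (ω : TotSp n m → TotSp n m →ₗ[ℝ] TotSp n m →ₗ[ℝ] ℝ)
    (y : TotSp n m) (u : Fin (2 * n) → ℝ) (v : TotSp n m) :
    ω y ((u, 0) : TotSp n m) v = ∑ l, u l * ω y (vertBasis n m l) v := by
  rw [vert_repr u, map_sum]
  simp [LinearMap.sum_apply, smul_eq_mul]

lemma coord_diff {n m : ℕ} {Zh : TotSp n m → Fin (2 * n) → ℝ}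
    (hZdiff : Differentiable ℝ Zh) (l : Fin (2 * n)) :
    Differentiable ℝ (fun y => Zh y l) :=
  differentiable_pi.mp hZdiff l

lemma hor_deriv {n m : ℕ} {ω : TotSp n m → TotSp n m →ₗ[ℝ] TotSp n m →ₗ[ℝ] ℝ}
    (hdiff : ∀ u v : TotSp n m, Differentiable ℝ fun x => ω x u v)
    {U : Fin m → ℝ} {Zh : TotSp n m → Fin (2 * n) → ℝ}
    (hZdiff : Differentiable ℝ Zh)
    (hZhor : ∀ (x : TotSp n m) (ξ : Fin (2 * n) → ℝ), ω x (Zh x, U) (ξ, 0) = 0)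
    (x : TotSp n m) (j i : Fin (2 * n)) :
    fderiv ℝ (fun y => ω y (Zh x, U) (vertBasis n m j)) x (vertBasis n m i)
      = -∑ l, Cmat n m Zh x l i * Amat n m ω x l j := by
  have hfun : (fun y => ω y (Zh x, U) (vertBasis n m j))
      = fun y => ∑ l, (Zh x l - Zh y l) * ω y (vertBasis n m l) (vertBasis n m j) := by
    funext y
    have h0 : ω y (Zh y, U) (vertBasis n m j) = 0 := hZhor y (Pi.single j 1)
    have hw : ((Zh x, U) : TotSp n m) = ((Zh x - Zh y, 0) : TotSp n m) + (Zh y, U) := by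
      apply Prod.ext <;> simp
    rw [hw, map_add, LinearMap.add_apply, h0, add_zero, omega_expand]
    simp [Pi.sub_apply]
  have hder : HasFDerivAt
      (fun y => ∑ l, (Zh x l - Zh y l) * ω y (vertBasis n m l) (vertBasis n m j))
      (∑ l : Fin (2 * n),
        ((Zh x l - Zh x l) • fderiv ℝ (fun y => ω y (vertBasis n m l) (vertBasis n m j)) x
          + (ω x (vertBasis n m l) (vertBasis n m j)) •
              ((0 : TotSp n m →L[ℝ] ℝ) - fderiv ℝ (fun y => Zh y l) x))) x := by
    apply HasFDerivAt.fun_sum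
    intro l _
    exact ((hasFDerivAt_const (Zh x l) x).sub ((coord_diff hZdiff l) x).hasFDerivAt).mul
      ((hdiff _ _) x).hasFDerivAt
  rw [hfun, hder.fderiv]
  simp only [ContinuousLinearMap.coe_sum', Finset.sum_apply, ContinuousLinearMap.add_apply,
    ContinuousLinearMap.coe_smul', Pi.smul_apply, sub_self, zero_smul, zero_add,
    ContinuousLinearMap.coe_sub', Pi.sub_apply, ContinuousLinearMap.zero_apply, zero_sub, ContinuousLinearMap.neg_apply,
    smul_eq_mul]
  rw [← Finset.sum_neg_distrib]
  refine Finset.sum_congr rfl fun l _ => ?_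
  unfold Cmat Amat
  ring

lemma key_deriv {n m : ℕ} {ω : TotSp n m → TotSp n m →ₗ[ℝ] TotSp n m →ₗ[ℝ] ℝ}
    (halt : ∀ (x : TotSp n m) (u v : TotSp n m), ω x u v = -ω x v u)
    (hdiff : ∀ u v : TotSp n m, Differentiable ℝ fun x => ω x u v)
    (hclosed : ∀ (x : TotSp n m) (u v t : TotSp n m),
      fderiv ℝ (fun y => ω y v t) x u - fderiv ℝ (fun y => ω y u t) x v
        + fderiv ℝ (fun y => ω y u v) x t = 0)
    {U : Fin m → ℝ} {Zh : TotSp n m → Fin (2 * n) → ℝ}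
    (hZdiff : Differentiable ℝ Zh)
    (hZhor : ∀ (x : TotSp n m) (ξ : Fin (2 * n) → ℝ), ω x (Zh x, U) (ξ, 0) = 0)
    (x : TotSp n m) (i j : Fin (2 * n)) :
    fderiv ℝ (fun y => ω y (vertBasis n m i) (vertBasis n m j)) x (Zh x, U)
      = -∑ l, (Cmat n m Zh x l i * Amat n m ω x l j
          + Cmat n m Zh x l j * Amat n m ω x i l) := by
  have hc := hclosed x (Zh x, U) (vertBasis n m i) (vertBasis n m j)
  rw [hor_deriv hdiff hZdiff hZhor x j i, hor_deriv hdiff hZdiff hZhor x i j] at hc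
  have e1 : ∑ l, Cmat n m Zh x l j * Amat n m ω x l i
      = -∑ l, Cmat n m Zh x l j * Amat n m ω x i l := by
    rw [← Finset.sum_neg_distrib]
    refine Finset.sum_congr rfl fun l _ => ?_
    have : Amat n m ω x l i = -Amat n m ω x i l := halt x _ _
    rw [this]; ring
  rw [e1] at hc
  rw [Finset.sum_add_distrib]
  linarith


end Stmt9

/-- equation (0.14): for a Kähler fibration, i.e. when ω is closed and
T^H W is the ω-orthogonal complement of TX, the 1-form k(U^H) = ½(L_{U^H} dv_X)/dv_X
vanishes identically: the horizontal Lie derivative of the fiberwise volume form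
dv_X = (ω^n)^{(0)}/n! is zero.
Model (local coordinates): W = ℝ^{2n} × ℝ^m with fibers ℝ^{2n} × {s}; ω a smooth family
of alternating bilinear forms which is closed (the coordinate exterior derivative on
constant vector fields vanishes), of type (1,1) and positive along the fibers for a
vertical complex structure J; U is a constant vector field on the base, and its
horizontal lift is U^H = (Zh x, U), characterized by ω-orthogonality to all vertical
vectors.  The Lie derivative of dv_X along U^H has density
(L_{U^H} dv_X)/dx_V = D_{U^H}(fibDens) + fibDens · div_V(Zh), and the claim is that this
vanishes, i.e. k = 0. -/

theorem stmt_9 (n m : ℕ)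
    (ω : TotSp n m → TotSp n m →ₗ[ℝ] TotSp n m →ₗ[ℝ] ℝ)
    (halt : ∀ (x : TotSp n m) (u v : TotSp n m), ω x u v = -ω x v u)
    (hdiff : ∀ u v : TotSp n m, Differentiable ℝ fun x => ω x u v)
    (hclosed : ∀ (x : TotSp n m) (u v t : TotSp n m),
      fderiv ℝ (fun y => ω y v t) x u - fderiv ℝ (fun y => ω y u t) x v
        + fderiv ℝ (fun y => ω y u v) x t = 0)
    (J : (Fin (2 * n) → ℝ) →ₗ[ℝ] (Fin (2 * n) → ℝ))
    (hJ : ∀ v, J (J v) = -v)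
    (hJinv : ∀ (x : TotSp n m) (u v : Fin (2 * n) → ℝ),
      ω x (J u, 0) (J v, 0) = ω x (u, 0) (v, 0))
    (hpos : ∀ (x : TotSp n m) (v : Fin (2 * n) → ℝ), v ≠ 0 → 0 < ω x (v, 0) (J v, 0))
    (U : Fin m → ℝ)
    (Zh : TotSp n m → Fin (2 * n) → ℝ)
    (hZdiff : Differentiable ℝ Zh)
    (hZhor : ∀ (x : TotSp n m) (ξ : Fin (2 * n) → ℝ), ω x (Zh x, U) (ξ, 0) = 0) :
    ∀ x : TotSp n m,
      fderiv ℝ (fibDens n m ω) x (Zh x, U)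
          + fibDens n m ω x *
              ∑ i : Fin (2 * n), fderiv ℝ (fun y => Zh y i) x (vertBasis n m i)
        = 0 := by
  intro x
  classical
  set cst : ℝ := 1 / ((2 : ℝ) ^ n * n.factorial) with hcst
  have hprod : ∀ σ : Equiv.Perm (Fin (2 * n)), HasFDerivAt
      (fun y => ∏ i : Fin n,
        ω y (vertBasis n m (σ (Stmt9.pl n i))) (vertBasis n m (σ (Stmt9.pr n i))))
      (∑ k : Fin n,
        (∏ i ∈ Finset.univ.erase k,
          Stmt9.Amat n m ω x (σ (Stmt9.pl n i)) (σ (Stmt9.pr n i))) •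
        fderiv ℝ (fun y =>
          ω y (vertBasis n m (σ (Stmt9.pl n k))) (vertBasis n m (σ (Stmt9.pr n k)))) x) x :=
    fun σ => HasFDerivAt.finset_prod (fun i _ => ((hdiff _ _) x).hasFDerivAt)
  have hQ : HasFDerivAt (fibDens n m ω)
      (cst • ∑ σ : Equiv.Perm (Fin (2 * n)), Stmt9.sgnr σ •
        (∑ k : Fin n,
          (∏ i ∈ Finset.univ.erase k,
            Stmt9.Amat n m ω x (σ (Stmt9.pl n i)) (σ (Stmt9.pr n i))) •
          fderiv ℝ (fun y =>
            ω y (vertBasis n m (σ (Stmt9.pl n k))) (vertBasis n m (σ (Stmt9.pr n k)))) x)) x :=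
    (HasFDerivAt.fun_sum (fun σ _ => (hprod σ).const_mul (Stmt9.sgnr σ))).const_mul cst
  rw [hQ.fderiv]
  simp only [ContinuousLinearMap.smul_apply, ContinuousLinearMap.sum_apply, smul_eq_mul]
  simp only [Stmt9.key_deriv halt hdiff hclosed hZdiff hZhor x]
  have h2 : ∑ σ : Equiv.Perm (Fin (2 * n)), Stmt9.sgnr σ *
      ∑ k : Fin n,
        (∏ i ∈ Finset.univ.erase k,
          Stmt9.Amat n m ω x (σ (Stmt9.pl n i)) (σ (Stmt9.pr n i))) *
        -(∑ l, (Stmt9.Cmat n m Zh x l (σ (Stmt9.pl n k)) *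
              Stmt9.Amat n m ω x l (σ (Stmt9.pr n k))
            + Stmt9.Cmat n m Zh x l (σ (Stmt9.pr n k)) *
              Stmt9.Amat n m ω x (σ (Stmt9.pl n k)) l))
      = -∑ σ : Equiv.Perm (Fin (2 * n)), Stmt9.sgnr σ *
          ∑ k : Fin n,
            (∑ l, (Stmt9.Cmat n m Zh x l (σ (Stmt9.pl n k)) *
                Stmt9.Amat n m ω x l (σ (Stmt9.pr n k))
              + Stmt9.Cmat n m Zh x l (σ (Stmt9.pr n k)) *
                Stmt9.Amat n m ω x (σ (Stmt9.pl n k)) l)) *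
            ∏ i ∈ Finset.univ.erase k,
              Stmt9.Amat n m ω x (σ (Stmt9.pl n i)) (σ (Stmt9.pr n i)) := by
    rw [← Finset.sum_neg_distrib]
    refine Finset.sum_congr rfl fun σ _ => ?_
    have h21 : ∑ k : Fin n,
        (∏ i ∈ Finset.univ.erase k,
          Stmt9.Amat n m ω x (σ (Stmt9.pl n i)) (σ (Stmt9.pr n i))) *
        -(∑ l, (Stmt9.Cmat n m Zh x l (σ (Stmt9.pl n k)) *
              Stmt9.Amat n m ω x l (σ (Stmt9.pr n k))
            + Stmt9.Cmat n m Zh x l (σ (Stmt9.pr n k)) *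
              Stmt9.Amat n m ω x (σ (Stmt9.pl n k)) l))
        = -∑ k : Fin n,
            (∑ l, (Stmt9.Cmat n m Zh x l (σ (Stmt9.pl n k)) *
                Stmt9.Amat n m ω x l (σ (Stmt9.pr n k))
              + Stmt9.Cmat n m Zh x l (σ (Stmt9.pr n k)) *
                Stmt9.Amat n m ω x (σ (Stmt9.pl n k)) l)) *
            ∏ i ∈ Finset.univ.erase k,
              Stmt9.Amat n m ω x (σ (Stmt9.pl n i)) (σ (Stmt9.pr n i)) := by
      rw [← Finset.sum_neg_distrib]
      exact Finset.sum_congr rfl fun k _ => by ring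
    rw [h21]
    ring
  rw [h2, Stmt9.keyComb (Stmt9.Amat n m ω x) (Stmt9.Cmat n m Zh x)]
  have h3 : fibDens n m ω x = cst * Stmt9.Ppf (Stmt9.Amat n m ω x) := rfl
  have h4 : ∑ i : Fin (2 * n), fderiv ℝ (fun y => Zh y i) x (vertBasis n m i)
      = ∑ l, Stmt9.Cmat n m Zh x l l := rfl
  rw [h3, h4]
  ring
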